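/- arXiv:math/9910078 — 5 statements merged into one kernel-verified Lean document; each statement's English description precedes it below -/
import Mathlib

section
/- In a Courant algebroid satisfying axioms 2–5 of the non-skew-symmetric definition, the expression K(e₁,e₂,e₃) = (e₁∘e₂)∘e₃ + e₂∘(e₁∘e₃) − e₁∘(e₂∘e₃) is completely skew-symmetric in e₁, e₂, e₃; i.e., it vanishes whenever two of its arguments coincide. -/
/-- The data of a Courant algebroid (non-skew-symmetric formulation) satisfying
axioms 2–5 (the Leibniz–Jacobi axiom 1 is not assumed).  `C` plays the role of
the algebra of smooth functions on the base and `E` the module of sections. -/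
structure CourantData (C E : Type*) [CommRing C] [Algebra ℝ C]
    [AddCommGroup E] [Module ℝ E] [Module C E] [IsScalarTower ℝ C E] where
  circ : E →ₗ[ℝ] E →ₗ[ℝ] E
  form : E →ₗ[C] E →ₗ[C] C
  rho : E →ₗ[C] Derivation ℝ C C
  Dop : C →ₗ[ℝ] E
  form_symm : ∀ e h, form e h = form h e
  form_nondeg : ∀ e, (∀ h, form e h = 0) → e = 0
  D_def : ∀ (f : C) (e : E), form (Dop f) e = rho e f
  anchor_hom : ∀ e₁ e₂, rho (circ e₁ e₂) = ⁅rho e₁, rho e₂⁆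
  leibniz : ∀ (e₁ e₂ : E) (f : C), circ e₁ (f • e₂) = f • circ e₁ e₂ + rho e₁ f • e₂
  sym_part : ∀ e, circ e e = (1/2 : ℝ) • Dop (form e e)
  invariance : ∀ e h₁ h₂,
    rho e (form h₁ h₂) = form (circ e h₁) h₂ + form h₁ (circ e h₂)

/-- The Jacobi anomaly `K(e₁,e₂,e₃) = (e₁∘e₂)∘e₃ + e₂∘(e₁∘e₃) − e₁∘(e₂∘e₃)`. -/
def CourantData.K {C E : Type*} [CommRing C] [Algebra ℝ C]
    [AddCommGroup E] [Module ℝ E] [Module C E] [IsScalarTower ℝ C E]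
    (A : CourantData C E) (e₁ e₂ e₃ : E) : E :=
  A.circ (A.circ e₁ e₂) e₃ + A.circ e₂ (A.circ e₁ e₃) - A.circ e₁ (A.circ e₂ e₃)

namespace CourantData

variable {C E : Type*} [CommRing C] [Algebra ℝ C]
    [AddCommGroup E] [Module ℝ E] [Module C E] [IsScalarTower ℝ C E]
    (A : CourantData C E)

/-- Polarization of `sym_part`: `e∘h + h∘e = D⟨e,h⟩`. -/
lemma polar (e h : E) : A.circ e h + A.circ h e = A.Dop (A.form e h) := by
  have h1 := A.sym_part (e + h)
  have h2 := A.sym_part e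
  have h3 := A.sym_part h
  have hs : A.form h e = A.form e h := A.form_symm h e
  simp only [map_add, LinearMap.add_apply, hs] at h1
  rw [h2, h3] at h1
  have := h1
  -- rearrange
  have goal : A.circ e h + A.circ h e =
      (1/2 : ℝ) • A.Dop (A.form e h) + (1/2 : ℝ) • A.Dop (A.form e h) := by
    have := h1
    linear_combination (norm := module) this
  rw [goal]; module

/-- `e ∘ Df = D(ρ(e)f)`. -/
lemma circ_Dop (e : E) (f : C) : A.circ e (A.Dop f) = A.Dop (A.rho e f) := by
  have key : ∀ h : E, A.form (A.circ e (A.Dop f) - A.Dop (A.rho e f)) h = 0 := by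
    intro h
    have inv := A.invariance e (A.Dop f) h
    have anch := A.anchor_hom e h
    have hb : A.rho (A.circ e h) f = A.rho e (A.rho h f) - A.rho h (A.rho e f) := by
      rw [anch]; rfl
    have h1 : A.form (A.circ e (A.Dop f)) h = A.rho h (A.rho e f) := by
      have : A.form (A.circ e (A.Dop f)) h
          = A.rho e (A.form (A.Dop f) h) - A.form (A.Dop f) (A.circ e h) := by
        linear_combination -inv
      rw [this, A.D_def, A.D_def, hb]; ring
    rw [map_sub, LinearMap.sub_apply, h1, A.D_def]; ring
  have := A.form_nondeg _ key
  exact sub_eq_zero.mp this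

/-- `Df ∘ e = 0`. -/
lemma Dop_circ (f : C) (e : E) : A.circ (A.Dop f) e = 0 := by
  have hp := A.polar (A.Dop f) e
  have h2 := A.circ_Dop e f
  have hs : A.form (A.Dop f) e = A.rho e f := A.D_def f e
  -- circ (Df) e = Dop (form (Df) e) - circ e (Df) = Dop (ρ e f) - Dop (ρ e f) = 0
  have : A.circ (A.Dop f) e = A.Dop (A.form (A.Dop f) e) - A.circ e (A.Dop f) := by
    linear_combination (norm := module) hp
  rw [this, hs, h2, sub_self]

lemma K_first (e h : E) : A.K e e h = 0 := by
  unfold K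
  have h1 : A.circ e e = (1/2 : ℝ) • A.Dop (A.form e e) := A.sym_part e
  rw [h1]
  have : A.circ ((1/2 : ℝ) • A.Dop (A.form e e)) h
      = (1/2 : ℝ) • A.circ (A.Dop (A.form e e)) h := by
    rw [map_smul]; rfl
  rw [this, A.Dop_circ, smul_zero]
  abel

lemma K_last (e h : E) : A.K e h h = 0 := by
  unfold K
  have h1 : A.circ (A.circ e h) h + A.circ h (A.circ e h)
      = A.Dop (A.form (A.circ e h) h) := A.polar (A.circ e h) h
  have h2 : A.circ e (A.circ h h) = A.Dop (A.form (A.circ e h) h) := by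
    rw [A.sym_part h]
    have : A.circ e ((1/2 : ℝ) • A.Dop (A.form h h))
        = (1/2 : ℝ) • A.circ e (A.Dop (A.form h h)) := by
      rw [map_smul]
    rw [this, A.circ_Dop, A.invariance e h h]
    have hs : A.form h (A.circ e h) = A.form (A.circ e h) h := A.form_symm _ _
    rw [hs, map_add]
    module
  rw [h2]
  linear_combination (norm := module) h1

lemma K_antisymm12 (a b c : E) : A.K a b c = - A.K b a c := by
  have hexp : A.K (a + b) (a + b) c
      = A.K a a c + A.K a b c + A.K b a c + A.K b b c := by
    unfold K
    simp only [map_add, LinearMap.add_apply]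
    abel
  have h0 := A.K_first (a + b) c
  have ha := A.K_first a c
  have hb := A.K_first b c
  rw [h0, ha, hb] at hexp
  rw [zero_add, add_zero] at hexp
  exact eq_neg_of_add_eq_zero_left hexp.symm

end CourantData

/-- In a Courant algebroid satisfying axioms 2–5 of the non-skew-symmetric
definition, the expression `K` is completely skew-symmetric, i.e. it vanishes
whenever two of its arguments coincide. -/
theorem courant_K_skew {C E : Type*} [CommRing C] [Algebra ℝ C]
    [AddCommGroup E] [Module ℝ E] [Module C E] [IsScalarTower ℝ C E]
    (A : CourantData C E) (e₁ e₂ e₃ : E) :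
    A.K e₁ e₁ e₃ = 0 ∧ A.K e₁ e₂ e₂ = 0 ∧ A.K e₁ e₂ e₁ = 0 := by
  refine ⟨A.K_first e₁ e₃, A.K_last e₁ e₂, ?_⟩
  rw [A.K_antisymm12 e₁ e₂ e₁, A.K_last e₂ e₁, neg_zero]
end

section
/- In a Courant algebroid with skew-symmetric bracket (original definition of Liu–Weinstein–Xu), for every section e and smooth function f one has [e, Df] = ½ D⟨e, Df⟩; in particular the image of D is an ideal for the bracket. -/
/-- A Courant algebroid in the original (skew-symmetric) formulation of
Liu–Weinstein–Xu, presented algebraically: `C` plays the role of the algebra of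
smooth functions on the base, `E` the module of sections, the anchor `ρ` takes
values in derivations of `C`, and `D : C → E` satisfies `⟨Df, e⟩ = ρ(e)f`.
Axiom 1 states that the Jacobiator equals `D T` where
`T(e₁,e₂,e₃) = (1/6)(⟨[e₁,e₂],e₃⟩ + c.p.)`. -/
structure CourantAlgebroidSkew (C E : Type*) [CommRing C] [Algebra ℝ C]
    [AddCommGroup E] [Module ℝ E] [Module C E] [IsScalarTower ℝ C E] where
  bracket : E →ₗ[ℝ] E →ₗ[ℝ] E
  form : E →ₗ[C] E →ₗ[C] C
  rho : E →ₗ[C] Derivation ℝ C C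
  Dop : C →ₗ[ℝ] E
  bracket_skew : ∀ e₁ e₂, bracket e₁ e₂ = - bracket e₂ e₁
  form_symm : ∀ e h, form e h = form h e
  form_nondeg : ∀ e, (∀ h, form e h = 0) → e = 0
  D_def : ∀ (f : C) (e : E), form (Dop f) e = rho e f
  axiom1 : ∀ e₁ e₂ e₃,
    bracket (bracket e₁ e₂) e₃ + bracket (bracket e₂ e₃) e₁ + bracket (bracket e₃ e₁) e₂ =
      Dop ((1/6 : ℝ) • (form (bracket e₁ e₂) e₃ + form (bracket e₂ e₃) e₁ +
        form (bracket e₃ e₁) e₂))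
  axiom2 : ∀ e₁ e₂, rho (bracket e₁ e₂) = ⁅rho e₁, rho e₂⁆
  axiom3 : ∀ (e₁ e₂ : E) (f : C), bracket e₁ (f • e₂) =
    f • bracket e₁ e₂ + rho e₁ f • e₂ - (1/2 : ℝ) • (form e₁ e₂ • Dop f)
  axiom4 : ∀ f g : C, form (Dop f) (Dop g) = 0
  axiom5 : ∀ e h₁ h₂, rho e (form h₁ h₂) =
    form (bracket e h₁ + (1/2 : ℝ) • Dop (form e h₁)) h₂ +
      form h₁ (bracket e h₂ + (1/2 : ℝ) • Dop (form e h₂))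

/-- The Jacobiator of the skew-symmetric bracket. -/
noncomputable def CourantAlgebroidSkew.J {C E : Type*} [CommRing C] [Algebra ℝ C]
    [AddCommGroup E] [Module ℝ E] [Module C E] [IsScalarTower ℝ C E]
    (A : CourantAlgebroidSkew C E) (e₁ e₂ e₃ : E) : E :=
  A.bracket (A.bracket e₁ e₂) e₃ + A.bracket (A.bracket e₂ e₃) e₁ +
    A.bracket (A.bracket e₃ e₁) e₂

/-- `T(e₁,e₂,e₃) = (1/6)(⟨[e₁,e₂],e₃⟩ + cyclic permutations)`. -/
noncomputable def CourantAlgebroidSkew.T {C E : Type*} [CommRing C] [Algebra ℝ C]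
    [AddCommGroup E] [Module ℝ E] [Module C E] [IsScalarTower ℝ C E]
    (A : CourantAlgebroidSkew C E) (e₁ e₂ e₃ : E) : C :=
  (1/6 : ℝ) • (A.form (A.bracket e₁ e₂) e₃ + A.form (A.bracket e₂ e₃) e₁ +
    A.form (A.bracket e₃ e₁) e₂)

/-- In a Courant algebroid with skew-symmetric bracket (original definition),
for every section `e` and function `f` one has `[e, Df] = ½ D⟨e, Df⟩`;
in particular the image of `D` is an ideal for the bracket. -/
theorem courant_skew_D_ideal {C E : Type*} [CommRing C] [Algebra ℝ C]
    [AddCommGroup E] [Module ℝ E] [Module C E] [IsScalarTower ℝ C E]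
    (A : CourantAlgebroidSkew C E) (e : E) (f : C) :
    A.bracket e (A.Dop f) = (1/2 : ℝ) • A.Dop (A.form e (A.Dop f)) := by
  have key : ∀ h : E,
      A.form (A.bracket e (A.Dop f) - (1/2 : ℝ) • A.Dop (A.form e (A.Dop f))) h = 0 := by
    intro h
    have h5 := A.axiom5 e (A.Dop f) h
    have hDf : ∀ x : E, A.form (A.Dop f) x = A.rho x f := fun x => A.D_def f x
    have hcomm : A.rho (A.bracket e h) f
        = A.rho e (A.rho h f) - A.rho h (A.rho e f) := by
      rw [A.axiom2]; simp [Derivation.commutator_apply]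
    have hz : A.rho (A.Dop (A.form e h)) f = 0 := by
      rw [← A.D_def]; exact A.axiom4 f _
    have hef : A.form e (A.Dop f) = A.rho e f := by
      rw [A.form_symm, hDf]
    simp only [map_add, LinearMap.add_apply, LinearMap.map_smul_of_tower,
      LinearMap.smul_apply, Derivation.add_apply, Derivation.smul_apply,
      hDf, A.D_def, hcomm, hz, hef, smul_zero] at h5
    have h6 : A.rho h (A.rho e f)
        = A.form (A.bracket e (A.Dop f)) h + (1/2 : ℝ) • A.rho h (A.rho e f) := by
      linear_combination (norm := module) h5
    have hform : A.form (A.bracket e (A.Dop f)) h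
        = (1/2 : ℝ) • A.rho h (A.rho e f) := by
      rw [eq_sub_of_add_eq h6.symm]; module
    simp only [map_sub, LinearMap.sub_apply, LinearMap.map_smul_of_tower,
      LinearMap.smul_apply, hform, A.D_def, hef, sub_self]
  exact sub_eq_zero.mp (A.form_nondeg _ key)
end

section
/- Let π_c = I ∂_I ∧ ∂_θ be the linear Poisson structure on the formal neighborhood of a circle (coordinates: formal variable I and angle θ), acting on the complex of formal multivector fields with coefficients f(I)e^{inθ} (formal power series in I, Fourier modes in θ), with differential d_{π_c} = [π_c, ·]. Then for each nonzero Fourier mode n ≠ 0 the complex X_n is acyclic: H⁰_n = H¹_n = H²_n = 0. -/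
/-- The differential `d_{π_c}` in degree `0` of the Fourier mode `n` of the
formal Poisson complex of `π_c = I ∂_I ∧ ∂_θ` near the necklace: for
`f·e^{inθ}` (with `f ∈ ℂ[[I]]`) it produces the pair of coefficient series of
`ξ = ∂_I` and `η = ∂_θ`, namely `in·I·f` and `−I·f'`. -/
noncomputable def necklaceD0 (n : ℤ) (f : PowerSeries ℂ) :
    PowerSeries ℂ × PowerSeries ℂ :=
  (PowerSeries.mk fun m =>
      if m = 0 then 0 else (n : ℂ) * Complex.I * PowerSeries.coeff (m - 1) f,
   PowerSeries.mk fun m => -((m : ℂ) * PowerSeries.coeff m f))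

/-- The differential `d_{π_c}` in degree `1` of the Fourier mode `n`: for
`(a·ξ + b·η)e^{inθ}` the `ξη`-coefficient series is
`−a₀ + Σ_{m≥1}((m−1)a_m + i n b_{m−1}) I^m`. -/
noncomputable def necklaceD1 (n : ℤ) (ab : PowerSeries ℂ × PowerSeries ℂ) :
    PowerSeries ℂ :=
  PowerSeries.mk fun m =>
    ((m : ℂ) - 1) * PowerSeries.coeff m ab.1 +
      (if m = 0 then 0 else (n : ℂ) * Complex.I * PowerSeries.coeff (m - 1) ab.2)

/-- For each nonzero Fourier mode `n ≠ 0`, the Poisson complex of the formal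
neighborhood of the necklace is acyclic: `H⁰_n = H¹_n = H²_n = 0`, i.e. the
degree-0 differential is injective, every 1-cocycle is a coboundary, and the
degree-1 differential is surjective. -/
theorem necklace_nonzero_mode_acyclic (n : ℤ) (hn : n ≠ 0) :
    (∀ f : PowerSeries ℂ, necklaceD0 n f = 0 → f = 0) ∧
    (∀ ab : PowerSeries ℂ × PowerSeries ℂ,
      necklaceD1 n ab = 0 → ∃ f, necklaceD0 n f = ab) ∧
    (∀ h : PowerSeries ℂ, ∃ ab, necklaceD1 n ab = h) := by
  have hnc : (n : ℂ) ≠ 0 := Int.cast_ne_zero.mpr hn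
  have hnI : (n : ℂ) * Complex.I ≠ 0 := mul_ne_zero hnc Complex.I_ne_zero
  refine ⟨?_, ?_, ?_⟩
  · intro f hf
    rw [Prod.ext_iff] at hf
    obtain ⟨h1, h2⟩ := hf
    ext m
    cases m with
    | zero =>
      have h0 := congrArg (PowerSeries.coeff 1) h1
      simp only [necklaceD0, PowerSeries.coeff_mk, map_zero, Prod.fst_zero,
        one_ne_zero, if_false] at h0
      have h0' : PowerSeries.coeff 0 f = 0 :=
        (mul_eq_zero.mp h0).resolve_left hnI
      simpa using h0'
    | succ k =>
      have h0 := congrArg (PowerSeries.coeff (k + 1)) h2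
      simp only [necklaceD0, PowerSeries.coeff_mk, map_zero, Prod.snd_zero,
        neg_eq_zero] at h0
      have hk : ((k : ℂ) + 1) ≠ 0 := Nat.cast_add_one_ne_zero k
      have h0' : PowerSeries.coeff (k + 1) f = 0 := by
        rcases mul_eq_zero.mp h0 with h | h
        · push_cast at h
          exact absurd h hk
        · exact h
      simpa using h0'
  · intro ab hab
    have hc : ∀ m : ℕ, ((m : ℂ) - 1) * PowerSeries.coeff m ab.1 +
        (if m = 0 then 0 else (n : ℂ) * Complex.I * PowerSeries.coeff (m - 1) ab.2) = 0 := by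
      intro m
      have := congrArg (PowerSeries.coeff m) hab
      simpa [necklaceD1] using this
    have ha0 : PowerSeries.constantCoeff ab.1 = 0 := by
      simpa using hc 0
    refine ⟨PowerSeries.mk fun m => PowerSeries.coeff (m + 1) ab.1 / ((n : ℂ) * Complex.I), ?_⟩
    rw [Prod.ext_iff]
    constructor
    · ext m
      cases m with
      | zero => simp [necklaceD0, ha0]
      | succ k =>
        simp only [necklaceD0, PowerSeries.coeff_mk, Nat.succ_ne_zero, if_false,
          Nat.add_sub_cancel]
        field_simp
    · ext m
      have := hc (m + 1)
      simp only [Nat.succ_ne_zero, if_false, Nat.add_sub_cancel, Nat.cast_add,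
        Nat.cast_one, add_sub_cancel_right] at this
      simp only [necklaceD0, PowerSeries.coeff_mk]
      field_simp
      linear_combination -this
  · intro h
    refine ⟨(PowerSeries.mk fun m => if m = 0 then -(PowerSeries.coeff 0 h) else 0,
        PowerSeries.mk fun m => PowerSeries.coeff (m + 1) h / ((n : ℂ) * Complex.I)), ?_⟩
    ext m
    cases m with
    | zero => simp [necklaceD1]
    | succ k =>
      have hk1 : (k : ℕ) + 1 - 1 = k := rfl
      simp only [necklaceD1, PowerSeries.coeff_mk, Nat.succ_ne_zero, if_false, hk1]
      field_simp
      simp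
end

section
/- For the zero Fourier mode of the Poisson complex of π_c = I ∂_I ∧ ∂_θ (θ-independent formal multivector fields in I), the cohomology is: H⁰ = R spanned by 1; H¹ = R² spanned by the classes of ∂_θ and I∂_I; H² = R spanned by the class of I ∂_I ∧ ∂_θ. -/
/-- The degree-0 differential of the zero Fourier mode of the Poisson complex of
`π_c = I ∂_I ∧ ∂_θ`: for a θ-independent formal function `f(I)`, one has
`d f = −I f'(I) η`; the value is the pair of coefficient series of
`ξ = ∂_I` and `η = ∂_θ`. -/
noncomputable def zeroModeD0 (f : PowerSeries ℝ) : PowerSeries ℝ × PowerSeries ℝ :=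
  (0, PowerSeries.mk fun m => -((m : ℝ) * PowerSeries.coeff m f))

/-- The degree-1 differential of the zero mode: for `a(I)ξ + b(I)η` the
`ξη`-coefficient series of the image is `Σ (m−1) a_m I^m`. -/
noncomputable def zeroModeD1 (ab : PowerSeries ℝ × PowerSeries ℝ) : PowerSeries ℝ :=
  PowerSeries.mk fun m => ((m : ℝ) - 1) * PowerSeries.coeff m ab.1

/-- The cohomology of the zero Fourier mode of the Poisson complex of
`π_c = I ∂_I ∧ ∂_θ`:
`H⁰ = ℝ`, spanned by `1` (the kernel in degree 0 consists of the constants);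
`H¹ = ℝ²`, spanned by the classes of `∂_θ` (i.e. `(0,1)`) and `I∂_I`
(i.e. `(I,0)`): every 1-cocycle is `s·(I,0) + t·(0,1)` plus a coboundary, and
no nontrivial such combination is a coboundary;
`H² = ℝ`, spanned by the class of `I ∂_I ∧ ∂_θ` (i.e. the series `I`): every
2-cochain is `u·I` plus a coboundary, and `u·I` is a coboundary only for
`u = 0`. -/
theorem necklace_zero_mode_cohomology :
    (∀ f : PowerSeries ℝ, zeroModeD0 f = 0 ↔ ∃ c : ℝ, f = PowerSeries.C c) ∧
    (∀ ab : PowerSeries ℝ × PowerSeries ℝ, zeroModeD1 ab = 0 →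
      ∃ (s t : ℝ) (f : PowerSeries ℝ),
        ab = (s • PowerSeries.X, PowerSeries.C t) + zeroModeD0 f) ∧
    (∀ (s t : ℝ) (f : PowerSeries ℝ),
      ((s • PowerSeries.X, PowerSeries.C t) : PowerSeries ℝ × PowerSeries ℝ) =
        zeroModeD0 f → s = 0 ∧ t = 0) ∧
    (∀ h : PowerSeries ℝ, ∃ (u : ℝ) (ab : PowerSeries ℝ × PowerSeries ℝ),
      h = u • PowerSeries.X + zeroModeD1 ab) ∧
    (∀ (u : ℝ) (ab : PowerSeries ℝ × PowerSeries ℝ),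
      u • PowerSeries.X = zeroModeD1 ab → u = 0) := by
  refine ⟨?_, ?_, ?_, ?_, ?_⟩
  · intro f
    constructor
    · intro hf
      refine ⟨PowerSeries.coeff 0 f, PowerSeries.ext fun n => ?_⟩
      have h2 := congrArg Prod.snd hf
      simp only [zeroModeD0, Prod.snd_zero] at h2
      have := congrArg (PowerSeries.coeff n) h2
      simp only [PowerSeries.coeff_mk, map_zero, neg_eq_zero] at this
      rw [PowerSeries.coeff_C]
      rcases Nat.eq_zero_or_pos n with h | h
      · simp [h]
      · have : (n : ℝ) ≠ 0 := Nat.cast_ne_zero.mpr h.ne'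
        rcases mul_eq_zero.mp ‹(n:ℝ) * _ = 0› with h' | h'
        · exact absurd h' this
        · simp [h.ne', h']
    · rintro ⟨c, rfl⟩
      unfold zeroModeD0
      refine Prod.ext rfl (PowerSeries.ext fun n => ?_)
      rcases Nat.eq_zero_or_pos n with h | h
      · simp [h]
      · simp [PowerSeries.coeff_C, h.ne']
  · intro ab hd
    refine ⟨PowerSeries.coeff 1 ab.1, PowerSeries.coeff 0 ab.2,
      PowerSeries.mk fun m => if m = 0 then 0 else -(PowerSeries.coeff m ab.2 / m), ?_⟩
    have ha : ∀ m : ℕ, m ≠ 1 → PowerSeries.coeff m ab.1 = 0 := by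
      intro m hm
      have := congrArg (PowerSeries.coeff m) hd
      simp only [zeroModeD1, PowerSeries.coeff_mk, map_zero] at this
      rcases mul_eq_zero.mp this with h' | h'
      · exfalso
        have : (m : ℝ) = 1 := by linarith
        exact hm (by exact_mod_cast this)
      · exact h'
    refine Prod.ext (PowerSeries.ext fun n => ?_) (PowerSeries.ext fun n => ?_)
    · simp only [zeroModeD0, Prod.fst_add, Prod.snd_add, map_add, Prod.fst_zero, map_zero,
        add_zero, PowerSeries.coeff_smul, PowerSeries.coeff_X, smul_eq_mul]
      rcases eq_or_ne n 1 with h | h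
      · simp [h]
      · simp [h, ha n h]
    · simp only [zeroModeD0, Prod.snd_add, map_add, PowerSeries.coeff_mk, PowerSeries.coeff_C]
      rcases Nat.eq_zero_or_pos n with h | h
      · simp [h]
      · have hn : (n : ℝ) ≠ 0 := Nat.cast_ne_zero.mpr h.ne'
        simp [h.ne']
        field_simp
  · intro s t f hf
    constructor
    · have := congrArg (fun p => PowerSeries.coeff 1 (Prod.fst p)) hf
      simpa [zeroModeD0, PowerSeries.coeff_smul] using this
    · have := congrArg (fun p => PowerSeries.coeff 0 (Prod.snd p)) hf
      simpa [zeroModeD0, PowerSeries.coeff_C] using this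
  · intro h
    refine ⟨PowerSeries.coeff 1 h,
      ⟨PowerSeries.mk fun m => if m = 1 then 0 else PowerSeries.coeff m h / ((m : ℝ) - 1), 0⟩,
      PowerSeries.ext fun n => ?_⟩
    simp only [zeroModeD1, map_add, PowerSeries.coeff_smul, PowerSeries.coeff_X,
      PowerSeries.coeff_mk, smul_eq_mul]
    rcases eq_or_ne n 1 with hn | hn
    · simp [hn]
    · have : (n : ℝ) - 1 ≠ 0 := by
        intro hc
        exact hn (by exact_mod_cast (by linarith : (n : ℝ) = 1))
      rw [if_neg hn, if_neg hn]
      field_simp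
      ring
  · intro u ab hu
    have := congrArg (PowerSeries.coeff 1) hu
    simpa [zeroModeD1, PowerSeries.coeff_smul] using this
end

section
/- There exists no smooth function f, 2π-periodic in the angle φ, such that the vector field E + X_f vanishes on the unit circle, where in polar coordinates (r,φ) on the unit disk E = (1/(2(c−1))) r ∂_r is the local Euler primitive and X_f is the hamiltonian vector field of f with respect to π_c = ½(r² − (1−c)/2)·(1/r)(∂f/∂φ ∂_r − ∂f/∂r ∂_φ)-convention; consequently the class of the invariant symplectic Poisson structure π is nonzero in the second Poisson cohomology H²_{π_c}(S²) of the necklace Poisson structure π_c (|c| < 1). -/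
/-- For a necklace Poisson structure `π_c` (`|c| < 1`) on `S²`, there is no
smooth function `f(r,φ)`, `2π`-periodic in the angle `φ`, such that the vector
field `E + X_f` vanishes on the unit circle, where
`E = (1/(2(c−1))) r ∂_r` is the local Euler primitive of the invariant
symplectic structure `π` (so that `[π_c, E] = π`) and `X_f` is the hamiltonian
vector field of `f` with respect to `π_c`.  In polar coordinates,
`E + X_f = (1/(2(c−1)))r ∂_r + (1/(2r))(r² − (1−c)/2)(∂_φ f ∂_r − ∂_r f ∂_φ)`;
at `r = 1` its `∂_r`-component is `1/(2(c−1)) + ((c+1)/4)·∂f/∂φ` and its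
`∂_φ`-component is `−((c+1)/4)·∂f/∂r`.  (This is the key step showing that the
class of `π` is nonzero in the Poisson cohomology `H²_{π_c}(S²)`.) -/
theorem no_periodic_primitive_on_necklace (c : ℝ) (hc : |c| < 1) :
    ¬ ∃ f : ℝ → ℝ → ℝ,
      ContDiff ℝ (⊤ : ℕ∞) (fun p : ℝ × ℝ => f p.1 p.2) ∧
      (∀ r φ : ℝ, f r (φ + 2 * Real.pi) = f r φ) ∧
      (∀ φ : ℝ,
        1 / (2 * (c - 1)) + (c + 1) / 4 * deriv (f 1) φ = 0 ∧
        -((c + 1) / 4) * deriv (fun r => f r φ) 1 = 0) := by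
  rintro ⟨f, hsmooth, hper, hvan⟩
  obtain ⟨hc1, hc2⟩ := abs_lt.mp hc
  have hcm : c - 1 ≠ 0 := by linarith
  have hcp : c + 1 ≠ 0 := by linarith
  set k : ℝ := 2 / ((1 - c) * (c + 1)) with hk
  have hkne : k ≠ 0 := by
    apply div_ne_zero
    · norm_num
    · apply mul_ne_zero <;> [skip; exact hcp]; intro h; apply hcm; linarith
  have hderiv : ∀ φ : ℝ, deriv (f 1) φ = k := by
    intro φ
    have h := (hvan φ).1
    rw [hk, eq_div_iff (mul_ne_zero (by intro h'; exact hcm (by linarith)) hcp)]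
    field_simp at h
    nlinarith [h]
  have hdiff : Differentiable ℝ (f 1) := by
    intro φ
    apply differentiableAt_of_deriv_ne_zero
    rw [hderiv]; exact hkne
  have hg : ∀ x y : ℝ, f 1 x - k * x = f 1 y - k * y := by
    apply is_const_of_deriv_eq_zero
    · exact hdiff.sub (differentiable_const k |>.mul differentiable_fun_id)
    · intro x
      have h1 : deriv (fun y : ℝ => k * y) x = k := by
        simpa using ((hasDerivAt_id x).const_mul k).deriv
      rw [deriv_fun_sub (hdiff x) (by fun_prop), hderiv x, h1, sub_self]
  have h2 := hg (0 + 2 * Real.pi) 0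
  rw [hper 1 0] at h2
  have hpi := Real.pi_ne_zero
  have h3 : k * (2 * Real.pi) = 0 := by linarith [h2]
  exact mul_ne_zero hkne (by positivity) h3
end
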